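/- Let S be a unital associative ring, σ an injective ring endomorphism of S, δ a left σ-derivation of S, and f ∈ S[t;σ,δ] monic of degree m. If g is a right divisor of f of degree r < m with invertible leading coefficient, then the principal left ideal of the Petit algebra S_f generated by g is a left S-module isomorphic to a submodule of S^m; it is free of rank m − r, i.e., it forms a linear code over S of length m and dimension m − deg(g). -/

import Mathlib

/-- A presentation of the skew polynomial ring `S[t;σ,δ]`: a ring `R` together with a
ring homomorphism `C : S →+* R`, a distinguished element `X` (playing the role of `t`)
satisfying the twisted commutation rule `X * C a = C (σ a) * X + C (δ a)`, and such that
every element of `R` is in a unique way a finite sum `∑ C aᵢ * X ^ i`. -/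
structure SkewPolyRing (S : Type*) [Ring S] (σ : S →+* S) (δ : S → S)
    (R : Type*) [Ring R] where
  C : S →+* R
  X : R
  X_mul : ∀ a : S, X * C a = C (σ a) * X + C (δ a)
  coeff : R ≃+ (ℕ →₀ S)
  coeff_symm_apply : ∀ p : ℕ →₀ S, coeff.symm p = p.sum fun i a => C a * X ^ i

namespace SkewPolyRing

variable {S : Type*} [Ring S] {σ : S →+* S} {δ : S → S} {R : Type*} [Ring R]

/-- The degree of a skew polynomial, with `deg 0 = ⊥`. -/
noncomputable def deg (P : SkewPolyRing S σ δ R) (x : R) : WithBot ℕ :=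
  (P.coeff x).support.max

/-- The leading coefficient of a skew polynomial. -/
noncomputable def lcoeff (P : SkewPolyRing S σ δ R) (x : R) : S :=
  P.coeff x ((P.deg x).unbotD 0)

/-- `f` is monic of degree `m`. -/
def Monic (P : SkewPolyRing S σ δ R) (f : R) (m : ℕ) : Prop :=
  P.deg f = (m : WithBot ℕ) ∧ P.coeff f m = 1

open Classical in
/-- The remainder of right division by `f`. -/
noncomputable def modr (P : SkewPolyRing S σ δ R) (f g : R) : R :=
  if h : ∃ qr : R × R, g = qr.1 * f + qr.2 ∧ P.deg qr.2 < P.deg f then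
    (Classical.choose h).2
  else g

/-- The multiplication `x ∘ y = (x * y) mod_r f` of the Petit algebra `S_f`. -/
noncomputable def pmul (P : SkewPolyRing S σ δ R) (f x y : R) : R :=
  P.modr f (x * y)

/-- The element of `S_f` with coefficient vector `c ∈ S^m`. -/
def ofVec (P : SkewPolyRing S σ δ R) {m : ℕ} (c : Fin m → S) : R :=
  ∑ i : Fin m, P.C (c i) * P.X ^ (i : ℕ)

end SkewPolyRing

/-- `δ` is a left `σ`-derivation of `S`. -/
def IsLeftSigmaDerivation {S : Type*} [Ring S] (σ : S →+* S) (δ : S → S) : Prop :=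
  (∀ a b : S, δ (a + b) = δ a + δ b) ∧ ∀ a b : S, δ (a * b) = σ a * δ b + δ a * b

namespace SkewPolyRing

variable {S : Type*} [Ring S] {σ : S →+* S} {δ : S → S} {R : Type*} [Ring R]

/-- `I` is a left ideal of the Petit algebra `S_f` (whose underlying set is
`{x | deg x < m}` with multiplication `pmul f`). -/
def IsLeftIdeal (P : SkewPolyRing S σ δ R) (f : R) (m : ℕ) (I : Set R) : Prop :=
  (∀ x ∈ I, P.deg x < (m : WithBot ℕ)) ∧ (0 : R) ∈ I ∧
    (∀ x ∈ I, ∀ y ∈ I, x + y ∈ I) ∧ (∀ x ∈ I, -x ∈ I) ∧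
    ∀ a : R, P.deg a < (m : WithBot ℕ) → ∀ x ∈ I, P.pmul f a x ∈ I

/-- The set `S_f ∘ g` of left multiples of `g` in the Petit algebra `S_f`:
the principal left ideal generated by `g`. -/
def leftMulSet (P : SkewPolyRing S σ δ R) (f : R) (m : ℕ) (g : R) : Set R :=
  {x : R | ∃ a : R, P.deg a < (m : WithBot ℕ) ∧ x = P.pmul f a g}

end SkewPolyRing

/-!
Every element of the principal left ideal `S_f ∘ g` is a genuine left multiple `b * g` with
`deg b < m - r`: if `a * g = c * f + rem`, then `rem = (a - c * q) * g`, and since the leading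
coefficient of `g` is a unit, degrees add in products with `g` on the right. Conversely every such
`b * g` already has degree `< m`, so it is its own remainder. Hence the code is the image of the
`S`-linear map `S^(m-r) → S^m`, `b ↦ b * g`, which is injective for the same reason.
-/

namespace SkewPolyRing

variable {S : Type*} [Ring S] {σ : S →+* S} {δ : S → S} {R : Type*} [Ring R]
variable (P : SkewPolyRing S σ δ R)

theorem coeff_symm_single (i : ℕ) (a : S) :
    P.coeff.symm (Finsupp.single i a) = P.C a * P.X ^ i := by
  rw [P.coeff_symm_apply, Finsupp.sum_single_index (by simp)]

theorem coeff_C_mul_X_pow (i : ℕ) (a : S) :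
    P.coeff (P.C a * P.X ^ i) = Finsupp.single i a := by
  rw [← P.coeff_symm_single, AddEquiv.apply_symm_apply]

theorem sum_C_mul_X_pow_coeff (x : R) : ((P.coeff x).sum fun i a => P.C a * P.X ^ i) = x := by
  rw [← P.coeff_symm_apply, AddEquiv.symm_apply_apply]

theorem coeff_C_mul (a : S) (x : R) (N : ℕ) : P.coeff (P.C a * x) N = a * P.coeff x N := by
  obtain ⟨p, rfl⟩ := P.coeff.symm.surjective x
  induction p using Finsupp.induction_linear with
  | zero => simp
  | add p q hp hq => simp only [map_add, mul_add, Finsupp.add_apply, hp, hq]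
  | single i b =>
    rw [coeff_symm_single, ← mul_assoc, ← map_mul, coeff_C_mul_X_pow, coeff_C_mul_X_pow,
      ← smul_eq_mul, ← Finsupp.smul_single, Finsupp.smul_apply, smul_eq_mul]

def DegLT (x : R) (n : ℕ) : Prop :=
  ∀ N, n ≤ N → P.coeff x N = 0

variable {P}

theorem DegLT.mono {x : R} {n k : ℕ} (h : P.DegLT x n) (hnk : n ≤ k) : P.DegLT x k :=
  fun N hN => h N (hnk.trans hN)

theorem DegLT.of_succ {x : R} {n : ℕ} (h : P.DegLT x (n + 1)) (hn : P.coeff x n = 0) :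
    P.DegLT x n := by
  intro N hN
  rcases hN.eq_or_lt with rfl | hlt
  exacts [hn, h N hlt]

theorem DegLT.sub {x y : R} {n : ℕ} (hx : P.DegLT x n) (hy : P.DegLT y n) :
    P.DegLT (x - y) n := by
  intro N hN
  rw [map_sub, Finsupp.sub_apply, hx N hN, hy N hN, sub_zero]

variable (P)

theorem degLT_zero_iff {x : R} : P.DegLT x 0 ↔ x = 0 := by
  refine ⟨fun h => P.coeff.injective ?_, fun h N _ => by rw [h, map_zero, Finsupp.zero_apply]⟩
  ext N
  rw [h N N.zero_le, map_zero, Finsupp.zero_apply]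

theorem exists_degLT (x : R) : ∃ n, P.DegLT x n := by
  obtain ⟨n, hn⟩ := (P.coeff x).support.exists_nat_subset_range
  refine ⟨n, fun N hN => Finsupp.notMem_support_iff.mp fun hmem => ?_⟩
  exact absurd (Finset.mem_range.mp (hn hmem)) (not_lt.mpr hN)

theorem deg_lt_iff_degLT {x : R} {n : ℕ} : P.deg x < n ↔ P.DegLT x n := by
  constructor
  · intro h N hN
    by_contra hc
    have := (Finset.le_max (Finsupp.mem_support_iff.mpr hc)).trans_lt h
    exact absurd (WithBot.coe_lt_coe.mp this) (not_lt.mpr hN)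
  · intro h
    refine lt_of_le_of_ne (Finset.max_le fun N hN => WithBot.coe_le_coe.mpr ?_) fun heq => ?_
    · by_contra hc
      exact Finsupp.mem_support_iff.mp hN (h N (not_le.mp hc).le)
    · exact Finsupp.mem_support_iff.mp (Finset.mem_of_max heq) (h n le_rfl)

theorem degLT_succ_of_deg_eq {x : R} {n : ℕ} (h : P.deg x = n) : P.DegLT x (n + 1) :=
  (P.deg_lt_iff_degLT).mp (h.trans_lt (WithBot.coe_lt_coe.mpr n.lt_succ_self))

theorem lcoeff_of_deg_eq {x : R} {n : ℕ} (h : P.deg x = n) : P.lcoeff x = P.coeff x n := by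
  rw [lcoeff, h]
  rfl

theorem degLT_C_mul_X_pow (a : S) (n : ℕ) : P.DegLT (P.C a * P.X ^ n) (n + 1) := by
  intro N hN
  rw [coeff_C_mul_X_pow, Finsupp.single_eq_of_ne (by omega)]

theorem degLT_sub_leading {x : R} {n : ℕ} (h : P.DegLT x (n + 1)) :
    P.DegLT (x - P.C (P.coeff x n) * P.X ^ n) n := by
  refine (h.sub (P.degLT_C_mul_X_pow _ n)).of_succ ?_
  rw [map_sub, Finsupp.sub_apply, coeff_C_mul_X_pow, Finsupp.single_eq_same, sub_self]

theorem X_pow_mul_C_mul_X_pow (k : ℕ) : ∀ (j : ℕ) (a : S), ∃ w : R, P.DegLT w (k + j) ∧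
    P.X ^ k * (P.C a * P.X ^ j) = P.C (σ^[k] a) * P.X ^ (k + j) + w := by
  induction k with
  | zero => exact fun j a => ⟨0, fun N _ => by simp, by simp⟩
  | succ k ih =>
    intro j a
    obtain ⟨w₁, hw₁, h₁⟩ := ih (j + 1) (σ a)
    obtain ⟨w₂, hw₂, h₂⟩ := ih j (δ a)
    have hX : P.X * (P.C a * P.X ^ j) = P.C (σ a) * P.X ^ (j + 1) + P.C (δ a) * P.X ^ j := by
      rw [← mul_assoc, P.X_mul, add_mul, mul_assoc, ← pow_succ']
    refine ⟨w₁ + (P.C (σ^[k] (δ a)) * P.X ^ (k + j) + w₂), ?_, ?_⟩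
    · intro N hN
      rw [map_add, map_add, Finsupp.add_apply, Finsupp.add_apply, hw₁ N (by omega),
        hw₂ N (by omega), coeff_C_mul_X_pow, Finsupp.single_eq_of_ne (by omega)]
      simp
    · rw [pow_succ, mul_assoc, hX, mul_add, h₁, h₂, Function.iterate_succ_apply,
        show k + (j + 1) = k + 1 + j by omega, add_assoc]

theorem coeff_C_mul_X_pow_mul_C_mul_X_pow {i j N : ℕ} (a b : S) (hN : i + j ≤ N) :
    P.coeff (P.C a * P.X ^ i * (P.C b * P.X ^ j)) N =
      if i + j = N then a * σ^[i] b else 0 := by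
  obtain ⟨w, hw, hXw⟩ := P.X_pow_mul_C_mul_X_pow i j b
  rw [mul_assoc, hXw, mul_add, map_add, Finsupp.add_apply, ← mul_assoc, ← map_mul,
    coeff_C_mul_X_pow, coeff_C_mul, hw N hN, mul_zero, add_zero, Finsupp.single_apply]

theorem coeff_mul_eq_zero {x y : R} {N : ℕ}
    (h : ∀ i j, N ≤ i + j → P.coeff x i = 0 ∨ P.coeff y j = 0) : P.coeff (x * y) N = 0 := by
  rw [← P.sum_C_mul_X_pow_coeff x, ← P.sum_C_mul_X_pow_coeff y, Finsupp.sum_mul,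
    map_finsuppSum, Finsupp.sum_apply]
  refine Finset.sum_eq_zero fun i hi => ?_
  dsimp only
  rw [Finsupp.mul_sum, map_finsuppSum, Finsupp.sum_apply]
  refine Finset.sum_eq_zero fun j hj => ?_
  dsimp only
  have hij : i + j < N := by
    by_contra hc
    rcases h i j (not_lt.mp hc) with h0 | h0
    exacts [Finsupp.mem_support_iff.mp hi h0, Finsupp.mem_support_iff.mp hj h0]
  rw [coeff_C_mul_X_pow_mul_C_mul_X_pow P _ _ hij.le, if_neg hij.ne]

variable {P}

theorem DegLT.mul {x y : R} {k l : ℕ} (hx : P.DegLT x k) (hy : P.DegLT y (l + 1)) :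
    P.DegLT (x * y) (k + l) := fun N hN =>
  P.coeff_mul_eq_zero fun i j hij =>
    if hik : k ≤ i then Or.inl (hx i hik) else Or.inr (hy j (by omega))

theorem coeff_mul_of_degLT {x y : R} {n p : ℕ} (hx : P.DegLT x (n + 1))
    (hy : P.DegLT y (p + 1)) :
    P.coeff (x * y) (n + p) = P.coeff x n * σ^[n] (P.coeff y p) := by
  set a := P.coeff x n
  set b := P.coeff y p
  have hsplit : x * y = (x - P.C a * P.X ^ n) * y + P.C a * P.X ^ n * (y - P.C b * P.X ^ p)
      + P.C a * P.X ^ n * (P.C b * P.X ^ p) := by noncomm_ring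
  have hlow₁ : P.coeff ((x - P.C a * P.X ^ n) * y) (n + p) = 0 :=
    (P.degLT_sub_leading hx).mul hy _ le_rfl
  have hlow₂ : P.coeff (P.C a * P.X ^ n * (y - P.C b * P.X ^ p)) (n + p) = 0 := by
    refine P.coeff_mul_eq_zero fun i j hij => ?_
    by_cases hin : i = n
    · exact Or.inr (P.degLT_sub_leading hy j (by omega))
    · exact Or.inl (by rw [coeff_C_mul_X_pow, Finsupp.single_eq_of_ne hin])
  rw [hsplit, map_add P.coeff, map_add P.coeff, Finsupp.add_apply, Finsupp.add_apply, hlow₁,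
    hlow₂, coeff_C_mul_X_pow_mul_C_mul_X_pow P _ _ le_rfl, if_pos rfl, zero_add, zero_add]

/-- Degrees add in `x * y`: its top coefficient `x_d * σ^d (y_l)` cannot vanish because
`σ^d (y_l)` is a unit. -/
theorem DegLT.of_mul {x y : R} {k l : ℕ} (hy : P.DegLT y (l + 1)) (hu : IsUnit (P.coeff y l))
    (h : P.DegLT (x * y) (k + l)) : P.DegLT x k := by
  obtain ⟨n, hn⟩ := P.exists_degLT x
  induction n with
  | zero => exact hn.mono k.zero_le
  | succ d ih =>
    by_cases hdk : d < k
    · exact hn.mono hdk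
    · refine ih (hn.of_succ ?_)
      have htop := coeff_mul_of_degLT hn hy
      rw [h (d + l) (by omega), ← RingHom.coe_pow] at htop
      exact (hu.map (σ ^ d)).mul_left_eq_zero.mp htop.symm

section Monic

variable {f : R} {m : ℕ}

theorem Monic.degLT (hf : P.Monic f m) : P.DegLT f (m + 1) :=
  P.degLT_succ_of_deg_eq hf.1

theorem Monic.eq_of_mul_add_eq_mul_add (hf : P.Monic f m) {c₁ c₂ r₁ r₂ : R}
    (heq : c₁ * f + r₁ = c₂ * f + r₂) (h₁ : P.DegLT r₁ m) (h₂ : P.DegLT r₂ m) : r₁ = r₂ := by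
  have hdiff : (c₁ - c₂) * f = r₂ - r₁ := by
    rw [sub_mul, sub_eq_sub_iff_add_eq_add, heq, add_comm]
  have hc : c₁ - c₂ = 0 := (P.degLT_zero_iff).mp <|
    DegLT.of_mul hf.degLT (hf.2 ▸ isUnit_one) (by rw [hdiff, zero_add]; exact h₂.sub h₁)
  rw [hc, zero_mul, eq_comm, sub_eq_zero] at hdiff
  exact hdiff.symm

theorem Monic.modr_eq (hf : P.Monic f m) {x c rem : R} (hx : x = c * f + rem)
    (hrem : P.DegLT rem m) : P.modr f x = rem := by
  have hex : ∃ qr : R × R, x = qr.1 * f + qr.2 ∧ P.deg qr.2 < P.deg f :=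
    ⟨(c, rem), hx, by rw [hf.1]; exact P.deg_lt_iff_degLT.mpr hrem⟩
  rw [modr, dif_pos hex]
  obtain ⟨hchoose, hdeg⟩ := Classical.choose_spec hex
  exact hf.eq_of_mul_add_eq_mul_add (hchoose.symm.trans hx)
    (P.deg_lt_iff_degLT.mp (hdeg.trans_eq hf.1)) hrem

theorem Monic.exists_eq_mul_add (hf : P.Monic f m) (x : R) :
    ∃ c rem : R, x = c * f + rem ∧ P.DegLT rem m := by
  obtain ⟨n, hn⟩ := P.exists_degLT x
  induction n generalizing x with
  | zero => exact ⟨0, x, by rw [zero_mul, zero_add], hn.mono m.zero_le⟩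
  | succ d ih =>
    by_cases hdm : d < m
    · exact ⟨0, x, by rw [zero_mul, zero_add], hn.mono hdm⟩
    -- subtract the left multiple of `f` that kills the coefficient of `t ^ d`
    set y := P.C (P.coeff x d) * P.X ^ (d - m) * f
    have hy : P.DegLT y (d + 1) := by
      have := (P.degLT_C_mul_X_pow (P.coeff x d) (d - m)).mul hf.degLT
      rwa [show d - m + 1 + m = d + 1 by omega] at this
    have htop : P.coeff y d = P.coeff x d := by
      have := coeff_mul_of_degLT (P.degLT_C_mul_X_pow (P.coeff x d) (d - m)) hf.degLT
      rwa [show d - m + m = d by omega, hf.2, iterate_map_one, mul_one, coeff_C_mul_X_pow,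
        Finsupp.single_eq_same] at this
    obtain ⟨c, rem, hc, hrem⟩ := ih (x - y)
      ((hn.sub hy).of_succ (by rw [map_sub, Finsupp.sub_apply, htop, sub_self]))
    refine ⟨P.C (P.coeff x d) * P.X ^ (d - m) + c, rem, ?_, hrem⟩
    rw [add_mul, add_assoc, ← hc]
    abel

end Monic

variable (P)

theorem coeff_ofVec {k : ℕ} (c : Fin k → S) (N : ℕ) :
    P.coeff (P.ofVec c) N = if h : N < k then c ⟨N, h⟩ else 0 := by
  simp_rw [ofVec, map_sum, Finsupp.finsetSum_apply, coeff_C_mul_X_pow, Finsupp.single_apply]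
  split_ifs with h
  · rw [Finset.sum_eq_single_of_mem ⟨N, h⟩ (Finset.mem_univ _)
      fun i _ hne => if_neg fun hi => hne (Fin.ext hi), if_pos rfl]
  · exact Finset.sum_eq_zero fun i _ => if_neg fun hi => h (by rw [← hi]; exact i.isLt)

theorem degLT_ofVec {k : ℕ} (c : Fin k → S) : P.DegLT (P.ofVec c) k := fun N hN => by
  rw [coeff_ofVec, dif_neg (not_lt.mpr hN)]

theorem ofVec_coeff {x : R} {k : ℕ} (h : P.DegLT x k) :
    P.ofVec (fun i : Fin k => P.coeff x i) = x := by
  refine P.coeff.injective (Finsupp.ext fun N => ?_)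
  rw [coeff_ofVec]
  split_ifs with hN
  · rfl
  · exact (h N (not_lt.mp hN)).symm

theorem range_ofVec (k : ℕ) : Set.range (P.ofVec (m := k)) = {x | P.DegLT x k} :=
  Set.ext fun x => ⟨by rintro ⟨c, rfl⟩; exact P.degLT_ofVec c,
    fun h => ⟨_, P.ofVec_coeff h⟩⟩

theorem ofVec_eq_zero {k : ℕ} {c : Fin k → S} (h : P.ofVec c = 0) : c = 0 := by
  funext i
  have := P.coeff_ofVec c i
  rwa [h, map_zero, Finsupp.zero_apply, dif_pos i.isLt, eq_comm] at this

theorem ofVec_add {k : ℕ} (c c' : Fin k → S) : P.ofVec (c + c') = P.ofVec c + P.ofVec c' := by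
  simp only [ofVec, Pi.add_apply, map_add, add_mul, Finset.sum_add_distrib]

theorem ofVec_smul {k : ℕ} (a : S) (c : Fin k → S) : P.ofVec (a • c) = P.C a * P.ofVec c := by
  simp only [ofVec, Pi.smul_apply, smul_eq_mul, map_mul, mul_assoc, Finset.mul_sum]

noncomputable def rightMulVec (g : R) (m k : ℕ) : (Fin k → S) →ₗ[S] (Fin m → S) where
  toFun c i := P.coeff (P.ofVec c * g) i
  map_add' c c' := by
    funext i
    rw [ofVec_add, add_mul, map_add, Finsupp.add_apply, Pi.add_apply]
  map_smul' a c := by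
    funext i
    rw [ofVec_smul, mul_assoc, coeff_C_mul]
    rfl

theorem range_rightMulVec (g : R) (m k : ℕ) :
    Set.range (P.rightMulVec g m k) =
      (fun x : R => fun i : Fin m => P.coeff x (i : ℕ)) '' ((· * g) '' {b | P.DegLT b k}) := by
  rw [← range_ofVec, Set.image_image, ← Set.range_comp]
  rfl

theorem rightMulVec_injective {g : R} {m k r : ℕ} (hg : P.DegLT g (r + 1))
    (hu : IsUnit (P.coeff g r)) (hkm : k + r ≤ m) : Function.Injective (P.rightMulVec g m k) := by
  refine (injective_iff_map_eq_zero _).mpr fun c hc => P.ofVec_eq_zero ?_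
  have hprod : P.DegLT (P.ofVec c * g) 0 := by
    intro N _
    by_cases hNm : N < m
    · exact congrFun hc ⟨N, hNm⟩
    · exact ((P.degLT_ofVec c).mul hg).mono hkm N (not_lt.mp hNm)
  exact (P.degLT_zero_iff).mp (DegLT.of_mul hg hu (hprod.mono (0 + r).zero_le))

theorem leftMulSet_eq_image {f g q : R} {m r : ℕ} (hf : P.Monic f m) (hdiv : f = q * g)
    (hg : P.DegLT g (r + 1)) (hu : IsUnit (P.coeff g r)) (hrm : r ≤ m) :
    P.leftMulSet f m g = (· * g) '' {b | P.DegLT b (m - r)} := by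
  have hmr : m - r + r = m := by omega
  ext x
  constructor
  · rintro ⟨a, ha, rfl⟩
    obtain ⟨c, rem, hc, hrem⟩ := hf.exists_eq_mul_add (a * g)
    have hrem_eq : (a - c * q) * g = rem := by
      rw [sub_mul, mul_assoc, ← hdiv, hc, add_sub_cancel_left]
    refine ⟨a - c * q, DegLT.of_mul hg hu (by rwa [hmr, hrem_eq]), ?_⟩
    change (a - c * q) * g = _
    rw [hrem_eq, pmul, hf.modr_eq hc hrem]
  · rintro ⟨b, hb, rfl⟩
    have hbg : P.DegLT (b * g) m := hmr ▸ hb.mul hg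
    exact ⟨b, P.deg_lt_iff_degLT.mpr (hb.mono (m.sub_le r)),
      (hf.modr_eq (zero_mul f ▸ (zero_add (b * g)).symm) hbg).symm⟩

end SkewPolyRing

theorem petit_principal_ideal_code_general {S R : Type*} [Ring S] [Ring R]
    (σ : S →+* S)
    (δ : S → S)
    (P : SkewPolyRing S σ δ R) (f : R) (m : ℕ) (hf : P.Monic f m)
    (g q : R) (hdiv : f = q * g) (r : ℕ) (hg : P.deg g = (r : WithBot ℕ))
    (hr : r < m) (hlc : IsUnit (P.lcoeff g)) :
    ∃ M : Submodule S (Fin m → S),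
      (M : Set (Fin m → S)) =
        (fun x : R => fun i : Fin m => P.coeff x (i : ℕ)) '' P.leftMulSet f m g ∧
      Nonempty (M ≃ₗ[S] (Fin (m - r) → S)) := by
  have hgr : P.DegLT g (r + 1) := P.degLT_succ_of_deg_eq hg
  have hu : IsUnit (P.coeff g r) := P.lcoeff_of_deg_eq hg ▸ hlc
  have hinj := P.rightMulVec_injective hgr hu (show m - r + r ≤ m by omega)
  refine ⟨LinearMap.range (P.rightMulVec g m (m - r)), ?_,
    ⟨(LinearEquiv.ofInjective _ hinj).symm⟩⟩
  rw [LinearMap.coe_range, P.range_rightMulVec, P.leftMulSet_eq_image hf hdiv hgr hu hr.le]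

/-- the principal left ideal generated by a right divisor of `f`
is a free code of length `m` and dimension `m - deg g`. Identifying each element
of `S_f` with its coefficient vector in `S^m`, the set of coefficient vectors of
the principal left ideal generated by `g` is an `S`-submodule of `S^m` which is
free of rank `m - r`. -/
theorem petit_principal_ideal_code {S R : Type*} [Ring S] [Ring R]
    (σ : S →+* S) (hσ : Function.Injective σ)
    (δ : S → S) (hδ : IsLeftSigmaDerivation σ δ)
    (P : SkewPolyRing S σ δ R) (f : R) (m : ℕ) (hf : P.Monic f m)
    (g q : R) (hdiv : f = q * g) (r : ℕ) (hg : P.deg g = (r : WithBot ℕ))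
    (hr : r < m) (hlc : IsUnit (P.lcoeff g)) :
    ∃ M : Submodule S (Fin m → S),
      (M : Set (Fin m → S)) =
        (fun x : R => fun i : Fin m => P.coeff x (i : ℕ)) '' P.leftMulSet f m g ∧
      Nonempty (M ≃ₗ[S] (Fin (m - r) → S)) :=
  petit_principal_ideal_code_general σ δ P f m hf g q hdiv r hg hr hlc
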